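/- arXiv:2010.10793 — 3 statements merged into one kernel-verified Lean document; each statement's English description precedes it below -/
import Mathlib

section
/- Let X be a type, t : X, and A B : X → X → Prop, and let Step and the cost set C be as defined. If A is symmetric (∀ x y, A x y → A y x) and P, P' : X satisfy Relation.ReflTransGen A P P', then C(P) = C(P'). (This is the core of the paper's Proposition: the set of possible numbers of negative type 2 deformations in reducing sequences is unchanged by (1,3) homotopy.) -/
/-- One counted step: an `A`-step keeps the counter, a `B`-step increments it. -/
def Step {X : Type*} (A B : X → X → Prop) : X × ℕ → X × ℕ → Prop :=
  fun p q => (A p.1 q.1 ∧ q.2 = p.2) ∨ (B p.1 q.1 ∧ q.2 = p.2 + 1)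

/-- The cost set of `P`: numbers of `B`-steps in reducing sequences from `P` to `t`. -/
def costSet {X : Type*} (t : X) (A B : X → X → Prop) (P : X) : Set ℕ :=
  {n : ℕ | Relation.ReflTransGen (Step A B) (P, 0) (t, n)}

private lemma lift {X : Type*} (A B : X → X → Prop) {P P' : X}
    (h : Relation.ReflTransGen A P P') :
    Relation.ReflTransGen (Step A B) (P, 0) (P', 0) := by
  induction h with
  | refl => exact Relation.ReflTransGen.refl
  | tail _ hab ih => exact ih.tail (Or.inl ⟨hab, rfl⟩)

private lemma subset_of {X : Type*} (t : X) (A B : X → X → Prop) {P P' : X}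
    (h : Relation.ReflTransGen A P P') :
    costSet t A B P' ⊆ costSet t A B P := by
  intro n hn
  exact (lift A B h).trans hn

theorem costSet_invariant {X : Type*} (t : X) (A B : X → X → Prop)
    (hA : ∀ x y, A x y → A y x) (P P' : X)
    (h : Relation.ReflTransGen A P P') :
    costSet t A B P = costSet t A B P' := by
  have h' : Relation.ReflTransGen A P' P := by
    induction h with
    | refl => exact Relation.ReflTransGen.refl
    | tail _ hab ih => exact Relation.ReflTransGen.head (hA _ _ hab) ih
  exact le_antisymm (subset_of t A B h') (subset_of t A B h)
end

section
/- Let X be a type, t : X, and A B : X → X → Prop, and let Step, the cost set C, and RII be as defined. If A is symmetric (∀ x y, A x y → A y x) and P, P' : X satisfy Relation.ReflTransGen A P P', then RII(P) = RII(P'). (This is the paper's Proposition: the RII number of a knot projection is an invariant of (1,3) homotopy.) -/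
/-- The RII number of `P`: the infimum in `ℕ∞` of the cost set. -/
noncomputable def RII {X : Type*} (t : X) (A B : X → X → Prop) (P : X) : ℕ∞ :=
  sInf {n : ℕ∞ | ∃ m ∈ costSet t A B P, (m : ℕ∞) = n}


lemma costSet_subset_of_A {X : Type*} (t : X) (A B : X → X → Prop) {x y : X}
    (hxy : A x y) : costSet t A B y ⊆ costSet t A B x := fun n hn =>
  Relation.ReflTransGen.head (b := (y, 0)) (Or.inl ⟨hxy, rfl⟩) hn

theorem RII_invariant {X : Type*} (t : X) (A B : X → X → Prop)
    (hA : ∀ x y, A x y → A y x) (P P' : X)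
    (h : Relation.ReflTransGen A P P') :
    RII t A B P = RII t A B P' := by
  have key : costSet t A B P = costSet t A B P' := by
    induction h with
    | refl => rfl
    | tail hab hbc ih =>
      exact ih.trans (Set.Subset.antisymm
        (costSet_subset_of_A t A B (hA _ _ hbc)) (costSet_subset_of_A t A B hbc))
  unfold RII
  rw [key]
end

section
/- Let X be a type, t : X, and A B : X → X → Prop with A symmetric (∀ x y, A x y → A y x), and let Step, the cost set C, and RII be as defined. Suppose there exists a family P : ℕ → X such that RII(P m) = (m : ℕ∞) for every m : ℕ. Then: (a) for all m m' : ℕ, Relation.ReflTransGen A (P m) (P m') implies m = m'; and (b) the quotient of X by the equivalence relation generated by A (EqvGen A) is infinite. (This is the paper's Corollary: since RII(P(m,n)) = m, there exist infinitely many (1,3) homotopy classes of knot projections.) -/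
/-
A single `A`-step can be prepended to any counted sequence without changing its count, so `x` and
`y` related by `A` in both directions have the same cost set and hence the same RII number. The RII
number therefore descends to the quotient by `EqvGen A`, where it takes every value `m` at `P m`.
-/

section

variable {X : Type*} (t : X) {A : X → X → Prop} (B : X → X → Prop)

theorem costSet_subset_of_rel {x y : X} (h : A x y) : costSet t A B y ⊆ costSet t A B x :=
  fun _ hn => Relation.ReflTransGen.head (b := (y, 0)) (Or.inl ⟨h, rfl⟩) hn

theorem RII_eq_of_eqvGen (hA : ∀ x y, A x y → A y x) {x y : X} (h : Relation.EqvGen A x y) :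
    RII t A B x = RII t A B y := by
  induction h with
  | rel x y hxy =>
    rw [RII, RII, (costSet_subset_of_rel t B hxy).antisymm (costSet_subset_of_rel t B (hA x y hxy))]
  | refl => rfl
  | symm _ _ _ ih => exact ih.symm
  | trans _ _ _ _ _ ih₁ ih₂ => exact ih₁.trans ih₂

end

theorem infinitely_many_homotopy_classes {X : Type*} (t : X) (A B : X → X → Prop)
    (hA : ∀ x y, A x y → A y x)
    (P : ℕ → X) (hP : ∀ m : ℕ, RII t A B (P m) = (m : ℕ∞)) :
    (∀ m m' : ℕ, Relation.ReflTransGen A (P m) (P m') → m = m') ∧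
      Infinite (Quot (Relation.EqvGen A)) := by
  have eq_of_eqvGen {m m' : ℕ} (h : Relation.EqvGen A (P m) (P m')) : m = m' := by
    have := RII_eq_of_eqvGen t B hA h
    rwa [hP, hP, Nat.cast_inj] at this
  refine ⟨fun m m' h => eq_of_eqvGen (Relation.EqvGen.reflTransGen_le_eqvGen (r := A) _ _ h), ?_⟩
  refine Infinite.of_injective (fun m => Quot.mk _ (P m)) fun m m' h => eq_of_eqvGen ?_
  simpa only [(Relation.EqvGen.is_equivalence A).eqvGen_iff] using Quot.eqvGen_exact h
end
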